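/- arXiv:math/0701594 — 2 statements merged into one kernel-verified Lean document; each statement's English description precedes it below -/
import Mathlib

section
/- Let n ≥ 1 be an integer, r > 0 and 0 < h ≤ r, and let Q := [−r,r]ⁿ × [0,h] ⊂ ℝ^{n+1}. Let g : Q → ℝ be continuously differentiable. Define A := {y ∈ Q : g(y) ≤ 0}, B := {y ∈ Q : g(y) ≥ 1}, and C := {y ∈ Q : 0 < g(y) < 1}, and let |·| denote (n+1)-dimensional Lebesgue measure. Then there is a constant C₀ depending only on n such that |A| · |B| ≤ C₀ · r^{n+2} · ∫_C |∇g(y)| dy. -/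
open MeasureTheory Set

/-- The box `Q = [-r,r]^n × [0,h] ⊆ ℝ^{n+1}`. -/
def Qbox (n : ℕ) (r h : ℝ) : Set ((Fin n → ℝ) × ℝ) :=
  (Set.univ.pi fun _ : Fin n => Set.Icc (-r) r) ×ˢ Set.Icc 0 h

/-!
For `x ∈ A` and `y ∈ B`, `g` climbs from `≤ 0` to `≥ 1` along the segment `[x, y]`, so the
fundamental theorem of calculus on a subinterval where `0 < g < 1` gives
`1 ≤ |y - x| ∫₀¹ 1_C |∇g| (x + t (y - x)) dt`. Integrate this over `A × B` and move the
`t`-integral outside: for fixed `t`, the map `y ↦ x + t (y - x)` (when `t ≥ 1/2`) or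
`x ↦ x + t (y - x)` (when `t < 1/2`) is a homothety of ratio at least `1/2`, so it distorts volume
by a factor at most `2^(n+1)`. This gives `|A| |B| ≤ 2^(n+1) diam Q |Q| ∫_C |∇g|`, and on the box
`diam Q ≤ 2r` and `|Q| ≤ (2r)^n r`.
-/

open Module
open scoped ENNReal

theorem ContinuousOn.measurableSet_inter_preimage {α β : Type*} [TopologicalSpace α]
    [MeasurableSpace α] [OpensMeasurableSpace α] [TopologicalSpace β] [MeasurableSpace β]
    [BorelSpace β] {f : α → β} {s : Set α} {t : Set β} (hf : ContinuousOn f s)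
    (hs : MeasurableSet s) (ht : MeasurableSet t) : MeasurableSet (s ∩ f ⁻¹' t) := by
  convert hs.subtype_image (hf.domRestrict.measurable ht) using 1
  ext x
  simp [and_comm]

theorem exists_Ioo_mapsTo_Ioo_of_le_zero_of_one_le {φ : ℝ → ℝ} (hφ : ContinuousOn φ (Icc 0 1))
    (h0 : φ 0 ≤ 0) (h1 : 1 ≤ φ 1) :
    ∃ a b, 0 ≤ a ∧ a < b ∧ b ≤ 1 ∧ φ a ≤ 0 ∧ 1 ≤ φ b ∧ MapsTo φ (Ioo a b) (Ioo 0 1) := by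
  -- `b` is the first time `φ` reaches `1`, and `a` the last time before `b` that `φ ≤ 0`.
  obtain ⟨b, ⟨⟨hb0, hb1⟩, hφb⟩, hb_least⟩ : ∃ b, IsLeast {t ∈ Icc (0 : ℝ) 1 | 1 ≤ φ t} b :=
    (isCompact_Icc.of_isClosed_subset (hφ.preimage_isClosed_of_isClosed isClosed_Icc
      isClosed_Ici) inter_subset_left).exists_isLeast ⟨1, ⟨by simp, h1⟩⟩
  obtain ⟨a, ⟨⟨ha0, hab⟩, hφa⟩, ha_greatest⟩ : ∃ a, IsGreatest {t ∈ Icc (0 : ℝ) b | φ t ≤ 0} a :=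
    (isCompact_Icc.of_isClosed_subset
      ((hφ.mono (Icc_subset_Icc le_rfl hb1)).preimage_isClosed_of_isClosed isClosed_Icc
        isClosed_Iic) inter_subset_left).exists_isGreatest ⟨0, ⟨⟨le_rfl, hb0⟩, h0⟩⟩
  refine ⟨a, b, ha0, hab.lt_of_ne ?_, hb1, hφa, hφb, fun t ⟨hat, htb⟩ => ⟨?_, ?_⟩⟩
  · rintro rfl
    linarith
  · by_contra! h
    exact (ha_greatest ⟨⟨ha0.trans hat.le, htb.le⟩, h⟩).not_gt hat
  · by_contra! h
    exact (hb_least ⟨⟨ha0.trans hat.le, htb.le.trans hb1⟩, h⟩).not_gt htb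

theorem one_le_setLIntegral_indicator_enorm_deriv {φ φ' : ℝ → ℝ}
    (hφ : ContinuousOn φ (Icc 0 1)) (hφ' : ∀ t ∈ Ioo (0 : ℝ) 1, HasDerivAt φ (φ' t) t)
    (hint : IntegrableOn φ' (Ioo 0 1)) (h0 : φ 0 ≤ 0) (h1 : 1 ≤ φ 1) :
    1 ≤ ∫⁻ t in Ioo 0 1, (φ ⁻¹' Ioo 0 1).indicator (fun t => ‖φ' t‖ₑ) t := by
  obtain ⟨a, b, ha0, hab, hb1, hφa, hφb, hmaps⟩ :=
    exists_Ioo_mapsTo_Ioo_of_le_zero_of_one_le hφ h0 h1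
  have hsub : Ioo a b ⊆ Ioo 0 1 := Ioo_subset_Ioo ha0 hb1
  have hint' : IntegrableOn φ' (Ioo a b) := hint.mono_set hsub
  have hFTC : φ b - φ a ≤ ∫ t in Ioo a b, ‖φ' t‖ := by
    rw [← intervalIntegral.integral_eq_sub_of_hasDerivAt_of_le hab.le
      (hφ.mono (Icc_subset_Icc ha0 hb1)) (fun t ht => hφ' t (hsub ht))
      ((intervalIntegrable_iff_integrableOn_Ioo_of_le hab.le).2 hint'),
      intervalIntegral.integral_of_le hab.le, integral_Ioc_eq_integral_Ioo]
    exact (le_abs_self _).trans abs_integral_le_integral_abs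
  calc (1 : ℝ≥0∞) ≤ ENNReal.ofReal (∫ t in Ioo a b, ‖φ' t‖) := by
        rw [← ENNReal.ofReal_one]
        exact ENNReal.ofReal_le_ofReal (by linarith)
    _ = ∫⁻ t in Ioo a b, (φ ⁻¹' Ioo 0 1).indicator (fun t => ‖φ' t‖ₑ) t := by
        rw [ofReal_integral_norm_eq_lintegral_enorm hint']
        exact setLIntegral_congr_fun measurableSet_Ioo fun t ht =>
          (indicator_of_mem (s := φ ⁻¹' Ioo 0 1) (hmaps ht) fun t => ‖φ' t‖ₑ).symm
    _ ≤ _ := lintegral_mono_set hsub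

section Scaling

variable {E : Type*} [NormedAddCommGroup E] [NormedSpace ℝ E] [MeasurableSpace E] [BorelSpace E]
  [FiniteDimensional ℝ E] (μ : Measure E) [μ.IsAddHaarMeasure]

theorem lintegral_comp_smul (f : E → ℝ≥0∞) {R : ℝ} (hR : R ≠ 0) :
    ∫⁻ x, f (R • x) ∂μ = ENNReal.ofReal |(R ^ finrank ℝ E)⁻¹| * ∫⁻ x, f x ∂μ := by
  rw [← smul_eq_mul, ← lintegral_smul_measure, ← Measure.map_addHaar_smul μ hR]
  exact (lintegral_map_equiv f
    (Homeomorph.smul (isUnit_iff_ne_zero.2 hR).unit).toMeasurableEquiv).symm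

theorem lintegral_comp_smul_add_le (f : E → ℝ≥0∞) {s : ℝ} (hs : 1 / 2 ≤ s) (c : E) :
    ∫⁻ x, f (s • x + c) ∂μ ≤ 2 ^ finrank ℝ E * ∫⁻ x, f x ∂μ := by
  have hs0 : 0 < s := by linarith
  rw [lintegral_comp_smul μ (fun x => f (x + c)) hs0.ne', lintegral_add_right_eq_self]
  gcongr
  rw [abs_of_pos (by positivity), ← inv_pow, ENNReal.ofReal_pow (by positivity)]
  gcongr
  rw [ENNReal.ofReal_le_iff_le_toReal (by simp)]
  simpa using inv_le_of_inv_le₀ (by norm_num) (by linarith : 2⁻¹ ≤ s)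

theorem lintegral_lintegral_comp_add_smul_sub_le {f : E → ℝ≥0∞} (hf : Measurable f)
    (A B : Set E) (t : ℝ) :
    ∫⁻ x in A, ∫⁻ y in B, f (x + t • (y - x)) ∂μ ∂μ ≤
      2 ^ finrank ℝ E * max (μ A) (μ B) * ∫⁻ z, f z ∂μ := by
  rcases le_or_gt (1 / 2) t with ht | ht
  · have hy : ∀ x, ∫⁻ y, f (x + t • (y - x)) ∂μ ≤ 2 ^ finrank ℝ E * ∫⁻ z, f z ∂μ := fun x => by
      have : ∀ y, x + t • (y - x) = t • y + (x - t • x) := fun y => by module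
      simpa only [this] using lintegral_comp_smul_add_le μ f ht _
    calc _ ≤ ∫⁻ _ in A, 2 ^ finrank ℝ E * ∫⁻ z, f z ∂μ ∂μ :=
          lintegral_mono fun x => (setLIntegral_le_lintegral _ _).trans (hy x)
      _ ≤ _ := by
          rw [setLIntegral_const, mul_right_comm]
          gcongr
          exact le_max_left _ _
  · have hx : ∀ y, ∫⁻ x, f (x + t • (y - x)) ∂μ ≤ 2 ^ finrank ℝ E * ∫⁻ z, f z ∂μ := fun y => by
      have : ∀ x, x + t • (y - x) = (1 - t) • x + t • y := fun x => by module
      simpa only [this] using lintegral_comp_smul_add_le μ f (by linarith : 1 / 2 ≤ 1 - t) _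
    rw [lintegral_lintegral_swap (f := fun x y => f (x + t • (y - x)))
      (hf.comp (by fun_prop : Measurable fun p : E × E => p.1 + t • (p.2 - p.1))).aemeasurable]
    calc _ ≤ ∫⁻ _ in B, 2 ^ finrank ℝ E * ∫⁻ z, f z ∂μ ∂μ :=
          lintegral_mono fun y => (setLIntegral_le_lintegral _ _).trans (hx y)
      _ ≤ _ := by
          rw [setLIntegral_const, mul_right_comm]
          gcongr
          exact le_max_right _ _

theorem lintegral_lintegral_lintegral_segment_le {f : E → ℝ≥0∞} (hf : Measurable f)
    (A B : Set E) :
    ∫⁻ x in A, ∫⁻ y in B, (∫⁻ t in Ioo (0 : ℝ) 1, f (x + t • (y - x))) ∂μ ∂μ ≤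
      2 ^ finrank ℝ E * max (μ A) (μ B) * ∫⁻ z, f z ∂μ := by
  have hF : Measurable fun p : (E × ℝ) × E => f (p.1.1 + p.1.2 • (p.2 - p.1.1)) :=
    hf.comp (by fun_prop)
  calc _ = ∫⁻ x in A, ∫⁻ t in Ioo (0 : ℝ) 1, ∫⁻ y in B, f (x + t • (y - x)) ∂μ ∂volume ∂μ :=
        lintegral_congr fun x => lintegral_lintegral_swap
          (hF.comp (by fun_prop : Measurable fun p : E × ℝ => ((x, p.2), p.1))).aemeasurable
    _ = ∫⁻ t in Ioo (0 : ℝ) 1, ∫⁻ x in A, ∫⁻ y in B, f (x + t • (y - x)) ∂μ ∂μ :=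
        lintegral_lintegral_swap hF.lintegral_prod_right'.aemeasurable
    _ ≤ ∫⁻ _ in Ioo (0 : ℝ) 1, 2 ^ finrank ℝ E * max (μ A) (μ B) * ∫⁻ z, f z ∂μ :=
        lintegral_mono fun t => lintegral_lintegral_comp_add_smul_sub_le μ hf A B t
    _ = _ := by simp

end Scaling

section Segment

variable {E : Type*} [NormedAddCommGroup E] [NormedSpace ℝ E] {Q : Set E} {g : E → ℝ}
  {g' : E → E →L[ℝ] ℝ}

theorem one_le_enorm_sub_mul_lintegral_segment (hQ : Convex ℝ Q)
    (hg : ∀ z ∈ Q, HasFDerivWithinAt g (g' z) Q z) (hg' : ContinuousOn g' Q)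
    {x y : E} (hx : x ∈ Q) (hx0 : g x ≤ 0) (hy : y ∈ Q) (hy1 : 1 ≤ g y) :
    1 ≤ ‖y - x‖ₑ * ∫⁻ t in Ioo (0 : ℝ) 1,
      {z ∈ Q | 0 < g z ∧ g z < 1}.indicator (fun z => ‖g' z‖ₑ) (x + t • (y - x)) := by
  set ℓ : ℝ → E := fun t => x + t • (y - x)
  have hℓ : ∀ t, HasDerivAt ℓ (y - x) t := fun t => by
    simpa only [id, one_smul] using ((hasDerivAt_id t).smul_const (y - x)).const_add x
  have hmaps : MapsTo ℓ (Icc 0 1) Q := fun t ⟨ht0, ht1⟩ => by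
    convert hQ hx hy (by linarith : 0 ≤ 1 - t) ht0 (by ring) using 1
    module
  have hφ : ∀ t ∈ Icc (0 : ℝ) 1, HasDerivWithinAt (g ∘ ℓ) (g' (ℓ t) (y - x)) (Icc 0 1) t :=
    fun t ht => (hg _ (hmaps ht)).comp_hasDerivWithinAt t (hℓ t).hasDerivWithinAt hmaps
  have hφ' : ContinuousOn (fun t => g' (ℓ t) (y - x)) (Icc 0 1) :=
    (hg'.comp (fun t _ => (hℓ t).continuousAt.continuousWithinAt) hmaps).clm_apply
      continuousOn_const
  refine (one_le_setLIntegral_indicator_enorm_deriv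
    (fun t ht => (hφ t ht).continuousWithinAt)
    (fun t ht => (hφ t (Ioo_subset_Icc_self ht)).hasDerivAt (Icc_mem_nhds ht.1 ht.2))
    (hφ'.integrableOn_Icc.mono_set Ioo_subset_Icc_self) (by simpa [ℓ]) (by simpa [ℓ])).trans ?_
  rw [← lintegral_const_mul' _ _ enorm_ne_top]
  refine setLIntegral_mono' measurableSet_Ioo fun t ht => ?_
  by_cases hC : (g ∘ ℓ) t ∈ Ioo 0 1
  · rw [indicator_of_mem (s := g ∘ ℓ ⁻¹' Ioo 0 1) hC,
      indicator_of_mem (s := {z ∈ Q | 0 < g z ∧ g z < 1}) ⟨hmaps (Ioo_subset_Icc_self ht), hC⟩,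
      mul_comm]
    exact ContinuousLinearMap.le_opENorm _ _
  · rw [indicator_of_notMem (s := g ∘ ℓ ⁻¹' Ioo 0 1) hC]
    exact zero_le

variable [MeasurableSpace E] [BorelSpace E] [FiniteDimensional ℝ E] (μ : Measure E)
  [μ.IsAddHaarMeasure]

theorem measure_mul_measure_le_lintegral_enorm_fderiv (hQ : Convex ℝ Q)
    (hQm : MeasurableSet Q) (hQb : Bornology.IsBounded Q)
    (hg : ∀ z ∈ Q, HasFDerivWithinAt g (g' z) Q z) (hg' : ContinuousOn g' Q) :
    μ {q ∈ Q | g q ≤ 0} * μ {q ∈ Q | 1 ≤ g q} ≤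
      2 ^ finrank ℝ E * Metric.ediam Q * μ Q *
        ∫⁻ q in {q ∈ Q | 0 < g q ∧ g q < 1}, ‖g' q‖ₑ ∂μ := by
  set A := {q ∈ Q | g q ≤ 0}
  set B := {q ∈ Q | 1 ≤ g q}
  set C := {q ∈ Q | 0 < g q ∧ g q < 1}
  set f := C.indicator fun z => ‖g' z‖ₑ
  have hgc : ContinuousOn g Q := fun z hz => (hg z hz).continuousWithinAt
  have hA : MeasurableSet A := hgc.measurableSet_inter_preimage hQm measurableSet_Iic
  have hB : MeasurableSet B := hgc.measurableSet_inter_preimage hQm measurableSet_Ici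
  have hC : MeasurableSet C := hgc.measurableSet_inter_preimage hQm measurableSet_Ioo
  have hf : Measurable f := by
    classical
    have hcont : ContinuousOn (fun z => ‖g' z‖ₑ) C := (hg'.mono (sep_subset _ _)).enorm
    simpa only [f, piecewise_eq_indicator] using
      hcont.measurable_piecewise (g := 0) continuousOn_const hC
  have hD : Metric.ediam Q ≠ ⊤ := hQb.ediam_ne_top
  calc μ A * μ B = ∫⁻ _ in A, ∫⁻ _ in B, 1 ∂μ ∂μ := by simp [mul_comm]
    _ ≤ ∫⁻ x in A, ∫⁻ y in B,
          Metric.ediam Q * (∫⁻ t in Ioo (0 : ℝ) 1, f (x + t • (y - x))) ∂μ ∂μ :=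
        setLIntegral_mono' hA fun x hx => setLIntegral_mono' hB fun y hy =>
          (one_le_enorm_sub_mul_lintegral_segment hQ hg hg' hx.1 hx.2 hy.1 hy.2).trans <| by
            gcongr
            rw [← edist_eq_enorm_sub]
            exact Metric.edist_le_ediam_of_mem hy.1 hx.1
    _ = Metric.ediam Q *
          ∫⁻ x in A, ∫⁻ y in B, (∫⁻ t in Ioo (0 : ℝ) 1, f (x + t • (y - x))) ∂μ ∂μ := by
        simp_rw [lintegral_const_mul' _ _ hD]
    _ ≤ Metric.ediam Q * (2 ^ finrank ℝ E * max (μ A) (μ B) * ∫⁻ z, f z ∂μ) := by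
        gcongr
        exact lintegral_lintegral_lintegral_segment_le μ hf A B
    _ ≤ Metric.ediam Q * (2 ^ finrank ℝ E * μ Q * ∫⁻ z, f z ∂μ) := by
        gcongr
        exact max_le (measure_mono inter_subset_left) (measure_mono inter_subset_left)
    _ = _ := by
        rw [lintegral_indicator hC]
        ring

theorem toReal_measure_mul_le_integral_norm_fderivWithin (hQc : IsCompact Q) (hQ : Convex ℝ Q)
    (hQu : UniqueDiffOn ℝ Q) (hg : ContDiffOn ℝ 1 g Q) :
    (μ {q ∈ Q | g q ≤ 0}).toReal * (μ {q ∈ Q | 1 ≤ g q}).toReal ≤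
      2 ^ finrank ℝ E * Metric.diam Q * (μ Q).toReal *
        ∫ q in {q ∈ Q | 0 < g q ∧ g q < 1}, ‖fderivWithin ℝ g Q q‖ ∂μ := by
  have hg' := hg.continuousOn_fderivWithin hQu le_rfl
  have key := measure_mul_measure_le_lintegral_enorm_fderiv μ hQ hQc.measurableSet
    hQc.isBounded (fun z hz => (hg.differentiableOn one_ne_zero z hz).hasFDerivWithinAt) hg'
  rw [← ofReal_integral_norm_eq_lintegral_enorm
    ((hg'.integrableOn_compact hQc).mono_set (sep_subset _ _))] at key
  have hfin : 2 ^ finrank ℝ E * Metric.ediam Q * μ Q * ENNReal.ofReal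
      (∫ q in {q ∈ Q | 0 < g q ∧ g q < 1}, ‖fderivWithin ℝ g Q q‖ ∂μ) ≠ ⊤ := by
    have hD := hQc.isBounded.ediam_ne_top
    have hμQ := hQc.measure_lt_top (μ := μ)
    finiteness
  simpa only [Metric.diam, ENNReal.toReal_mul, ENNReal.toReal_pow, ENNReal.toReal_ofNat,
    ENNReal.toReal_ofReal (integral_nonneg fun _ => norm_nonneg _)] using
    ENNReal.toReal_mono hfin key

end Segment

section Box

variable {n : ℕ} {r h : ℝ}

theorem isCompact_Qbox : IsCompact (Qbox n r h) :=
  (isCompact_univ_pi fun _ => isCompact_Icc).prod isCompact_Icc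

theorem convex_Qbox : Convex ℝ (Qbox n r h) :=
  (convex_pi fun _ _ => convex_Icc _ _).prod (convex_Icc _ _)

theorem uniqueDiffOn_Qbox (hr : 0 < r) (hh : 0 < h) : UniqueDiffOn ℝ (Qbox n r h) :=
  (UniqueDiffOn.univ_pi fun _ => uniqueDiffOn_Icc (by linarith)).prod (uniqueDiffOn_Icc hh)

theorem diam_Qbox_le (hr : 0 ≤ r) (hh : h ≤ 2 * r) : Metric.diam (Qbox n r h) ≤ 2 * r := by
  refine Metric.diam_le_of_forall_dist_le (by linarith) fun x hx y hy => ?_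
  refine max_le ((dist_pi_le_iff (by linarith)).2 fun i => ?_) ?_
  · linarith [Real.dist_le_of_mem_Icc (hx.1 i (mem_univ i)) (hy.1 i (mem_univ i))]
  · linarith [Real.dist_le_of_mem_Icc hx.2 hy.2]

theorem toReal_volume_Qbox (hr : 0 ≤ r) (hh : 0 ≤ h) :
    (volume (Qbox n r h)).toReal = (2 * r) ^ n * h := by
  rw [Qbox, Measure.volume_eq_prod, Measure.prod_prod, volume_pi_pi]
  simp [Real.volume_Icc, hr, hh, two_mul]

end Box

theorem deGiorgi_isoperimetric_box_general (n : ℕ) :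
    ∃ C₀ : ℝ, 0 < C₀ ∧ ∀ (r h : ℝ), 0 < r → 0 < h → h ≤ r →
      ∀ g : (Fin n → ℝ) × ℝ → ℝ, ContDiffOn ℝ 1 g (Qbox n r h) →
        (volume {q ∈ Qbox n r h | g q ≤ 0}).toReal *
            (volume {q ∈ Qbox n r h | 1 ≤ g q}).toReal ≤
          C₀ * r ^ (n + 2) *
            ∫ q in {q ∈ Qbox n r h | 0 < g q ∧ g q < 1},
              ‖fderivWithin ℝ g (Qbox n r h) q‖ := by
  refine ⟨4 ^ (n + 1), by positivity, fun r h hr hh hhr g hg => ?_⟩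
  have : (volume : Measure ((Fin n → ℝ) × ℝ)).IsAddHaarMeasure :=
    Measure.prod.instIsAddHaarMeasure _ _
  refine (toReal_measure_mul_le_integral_norm_fderivWithin volume isCompact_Qbox convex_Qbox
    (uniqueDiffOn_Qbox hr hh) hg).trans ?_
  rw [toReal_volume_Qbox hr.le hh.le, finrank_prod, finrank_fin_fun, finrank_self,
    show (4 : ℝ) ^ (n + 1) * r ^ (n + 2) = 2 ^ (n + 1) * (2 * r) * ((2 * r) ^ n * r) by
      rw [show (4 : ℝ) ^ (n + 1) = 2 ^ (n + 1) * 2 ^ (n + 1) by rw [← mul_pow]; norm_num]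
      ring]
  gcongr
  exact diam_Qbox_le hr.le (by linarith)

/-- Unweighted De Giorgi isoperimetric inequality on a box in `ℝ^{n+1}`
(display (3.14)): `|A| ⬝ |B| ≤ C₀ r^{n+2} ∫_C |∇g|`, with `C₀` depending only on `n`. -/
theorem deGiorgi_isoperimetric_box (n : ℕ) (hn : 1 ≤ n) :
    ∃ C₀ : ℝ, 0 < C₀ ∧ ∀ (r h : ℝ), 0 < r → 0 < h → h ≤ r →
      ∀ g : (Fin n → ℝ) × ℝ → ℝ, ContDiffOn ℝ 1 g (Qbox n r h) →
        (volume {q ∈ Qbox n r h | g q ≤ 0}).toReal *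
            (volume {q ∈ Qbox n r h | 1 ≤ g q}).toReal ≤
          C₀ * r ^ (n + 2) *
            ∫ q in {q ∈ Qbox n r h | 0 < g q ∧ g q < 1},
              ‖fderivWithin ℝ g (Qbox n r h) q‖ :=
  deGiorgi_isoperimetric_box_general n
end

section
/- Let n ≥ 1 be an integer, b ∈ [0,1), p₁ > 2(1+b)/(1−b), R > 0 and Z > 0. Set B := [−R,R]ⁿ and D := B × [0,Z]. Then there is a constant C₀ depending only on n, b, p₁, R and Z such that for every continuously differentiable f : D → ℝ satisfying f(x,Z) = 0 for all x ∈ B, one has ∫_B f(x,0)² dx ≤ C₀ · (∫∫_D z^b |f(x,z)|^{p₁} dx dz)^{1/p₁} · (∫∫_D z^b (∂_z f(x,z))² dx dz)^{1/2}. -/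
open MeasureTheory Set

/-- The cube `B = [-R,R]^n ⊆ ℝⁿ`. -/
def Bbox (n : ℕ) (R : ℝ) : Set (Fin n → ℝ) :=
  Set.univ.pi fun _ : Fin n => Set.Icc (-R) R

/-- The box `D = B × [0,Z] ⊆ ℝⁿ × ℝ₊`. -/
def Dbox (n : ℕ) (R Z : ℝ) : Set ((Fin n → ℝ) × ℝ) :=
  Bbox n R ×ˢ Set.Icc 0 Z

/-!
Since `f (x, Z) = 0`, the fundamental theorem of calculus along each vertical segment gives
`f(x,0)² ≤ 2 ∫₀^Z |f| |∂_z f| dz`, and integrating over `B` bounds the trace by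
`2 ∫∫_D |f| |∂_z f|`. Splitting `|f| |∂_z f|` as
`(z^b |f|^{p₁})^{1/p₁} · (z^b (∂_z f)²)^{1/2} · (z^{b(1-r)})^{1/r}` with `1/p₁ + 1/2 + 1/r = 1`,
Hölder's inequality with three exponents finishes the proof; the hypothesis
`p₁ > 2(1+b)/(1-b)` is exactly the integrability of `z^{b(1-r)}` at `z = 0`.
-/

section Holder

variable {α : Type*} [MeasurableSpace α] {μ : Measure α}

theorem integral_rpow_mul_rpow_mul_rpow_le {f g h : α → ℝ} (hf : 0 ≤ᵐ[μ] f) (hg : 0 ≤ᵐ[μ] g)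
    (hh : 0 ≤ᵐ[μ] h) (hfi : Integrable f μ) (hgi : Integrable g μ) (hhi : Integrable h μ)
    {a b c : ℝ} (ha : 0 ≤ a) (hb : 0 ≤ b) (hc : 0 ≤ c) (habc : a + b + c = 1) :
    ∫ x, f x ^ a * g x ^ b * h x ^ c ∂μ ≤
      (∫ x, f x ∂μ) ^ a * (∫ x, g x ∂μ) ^ b * (∫ x, h x ∂μ) ^ c := by
  have hnonneg : 0 ≤ᵐ[μ] fun x => f x ^ a * g x ^ b * h x ^ c := by
    filter_upwards [hf, hg, hh] with x hfx hgx hhx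
    exact mul_nonneg (mul_nonneg (Real.rpow_nonneg hfx a) (Real.rpow_nonneg hgx b))
      (Real.rpow_nonneg hhx c)
  have hmeas : AEStronglyMeasurable (fun x => f x ^ a * g x ^ b * h x ^ c) μ :=
    (((hfi.aemeasurable.pow_const a).mul (hgi.aemeasurable.pow_const b)).mul
      (hhi.aemeasurable.pow_const c)).aestronglyMeasurable
  have hofReal : ∀ᵐ x ∂μ, ENNReal.ofReal (f x ^ a * g x ^ b * h x ^ c) =
      ENNReal.ofReal (f x) ^ a * ENNReal.ofReal (g x) ^ b * ENNReal.ofReal (h x) ^ c := by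
    filter_upwards [hf, hg, hh] with x hfx hgx hhx
    rw [ENNReal.ofReal_mul (mul_nonneg (Real.rpow_nonneg hfx a) (Real.rpow_nonneg hgx b)),
      ENNReal.ofReal_mul (Real.rpow_nonneg hfx a),
      ENNReal.ofReal_rpow_of_nonneg hfx ha, ENNReal.ofReal_rpow_of_nonneg hgx hb,
      ENNReal.ofReal_rpow_of_nonneg hhx hc]
  have hholder := ENNReal.lintegral_prod_norm_pow_le (μ := μ) Finset.univ
    (f := ![fun x => ENNReal.ofReal (f x), fun x => ENNReal.ofReal (g x),
      fun x => ENNReal.ofReal (h x)]) (p := ![a, b, c])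
    (by simp [Fin.forall_fin_succ, hfi.aemeasurable.ennreal_ofReal,
      hgi.aemeasurable.ennreal_ofReal, hhi.aemeasurable.ennreal_ofReal])
    (by simpa [Fin.sum_univ_three] using habc) (by simp [Fin.forall_fin_succ, ha, hb, hc])
  simp only [Fin.prod_univ_three, Matrix.cons_val_zero, Matrix.cons_val_one,
    Matrix.cons_val_two, Matrix.head_cons, Matrix.tail_cons] at hholder
  rw [← ofReal_integral_eq_lintegral_ofReal hfi hf, ← ofReal_integral_eq_lintegral_ofReal hgi hg,
    ← ofReal_integral_eq_lintegral_ofReal hhi hh, ← lintegral_congr_ae hofReal] at hholder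
  rw [integral_eq_lintegral_of_nonneg_ae hnonneg hmeas]
  refine (ENNReal.toReal_mono (by finiteness) hholder).trans_eq ?_
  simp only [ENNReal.toReal_mul, ← ENNReal.toReal_rpow, ENNReal.toReal_ofReal
    (integral_nonneg_of_ae hf), ENNReal.toReal_ofReal (integral_nonneg_of_ae hg),
    ENNReal.toReal_ofReal (integral_nonneg_of_ae hh)]

theorem integral_abs_mul_abs_le_weighted {w u v : α → ℝ} {p s r : ℝ} (hp : 0 < p) (hs : 0 < s)
    (hr : 0 < r) (hpsr : 1 / p + 1 / s + 1 / r = 1) (hw : ∀ᵐ x ∂μ, 0 < w x)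
    (hu : Integrable (fun x => w x * |u x| ^ p) μ) (hv : Integrable (fun x => w x * |v x| ^ s) μ)
    (hw' : Integrable (fun x => w x ^ (1 - r)) μ) :
    ∫ x, |u x| * |v x| ∂μ ≤
      (∫ x, w x * |u x| ^ p ∂μ) ^ (1 / p) * (∫ x, w x * |v x| ^ s ∂μ) ^ (1 / s) *
        (∫ x, w x ^ (1 - r) ∂μ) ^ (1 / r) := by
  have hsplit : ∀ᵐ x ∂μ, |u x| * |v x| = (w x * |u x| ^ p) ^ (1 / p) *
      (w x * |v x| ^ s) ^ (1 / s) * (w x ^ (1 - r)) ^ (1 / r) := by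
    filter_upwards [hw] with x hwx
    have hweight : w x ^ (1 / p) * w x ^ (1 / s) * w x ^ ((1 - r) * (1 / r)) = 1 := by
      rw [← Real.rpow_add hwx, ← Real.rpow_add hwx]
      convert Real.rpow_zero (w x) using 2
      field_simp at hpsr ⊢
      linarith
    rw [Real.mul_rpow hwx.le (by positivity), Real.mul_rpow hwx.le (by positivity),
      one_div p, one_div s, Real.rpow_rpow_inv (abs_nonneg _) hp.ne',
      Real.rpow_rpow_inv (abs_nonneg _) hs.ne', ← one_div, ← one_div, ← Real.rpow_mul hwx.le]
    linear_combination (|u x| * |v x|) * hweight.symm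
  rw [integral_congr_ae hsplit]
  have hw0 : ∀ᵐ x ∂μ, 0 ≤ w x := hw.mono fun x hx => hx.le
  exact integral_rpow_mul_rpow_mul_rpow_le
    (by filter_upwards [hw0] with x hx using by positivity)
    (by filter_upwards [hw0] with x hx using by positivity)
    (by filter_upwards [hw0] with x hx using Real.rpow_nonneg hx _) hu hv hw'
    (by positivity) (by positivity) (by positivity) hpsr

end Holder

theorem sq_le_two_mul_integral_abs_mul_abs_deriv {φ φ' : ℝ → ℝ} {a b : ℝ} (hab : a ≤ b)
    (hφ : ∀ z ∈ Icc a b, HasDerivWithinAt φ (φ' z) (Icc a b) z)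
    (hφ' : ContinuousOn φ' (Icc a b)) (hb : φ b = 0) :
    φ a ^ 2 ≤ 2 * ∫ z in Icc a b, |φ z| * |φ' z| := by
  have hφc : ContinuousOn φ (Icc a b) := fun z hz => (hφ z hz).continuousWithinAt
  have hint : IntervalIntegrable (fun z => 2 * φ z * φ' z) volume a b :=
    ((continuousOn_const.mul hφc).mul hφ').intervalIntegrable_of_Icc hab
  have hftc : ∫ z in a..b, 2 * φ z * φ' z = φ b ^ 2 - φ a ^ 2 := by
    refine intervalIntegral.integral_eq_sub_of_hasDeriv_right_of_le hab (hφc.pow 2)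
      (fun z hz => ?_) hint
    have := ((hφ z (Ioo_subset_Icc_self hz)).hasDerivAt (Icc_mem_nhds hz.1 hz.2)).pow 2
    simpa [mul_comm] using this.hasDerivWithinAt
  calc φ a ^ 2 = -∫ z in a..b, 2 * φ z * φ' z := by rw [hftc, hb]; ring
    _ ≤ ∫ z in a..b, |2 * φ z * φ' z| :=
      (neg_le_abs _).trans (intervalIntegral.abs_integral_le_integral_abs hab)
    _ = 2 * ∫ z in Icc a b, |φ z| * |φ' z| := by
      rw [intervalIntegral.integral_of_le hab, ← integral_Icc_eq_integral_Ioc,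
        ← integral_const_mul]
      simp only [abs_mul, abs_two, mul_assoc]

theorem DifferentiableOn.hasDerivWithinAt_slice {E F : Type*} [NormedAddCommGroup E]
    [NormedSpace ℝ E] [NormedAddCommGroup F] [NormedSpace ℝ F] {f : E × ℝ → F} {s : Set E}
    {t : Set ℝ} (hf : DifferentiableOn ℝ f (s ×ˢ t)) {x : E} (hx : x ∈ s) {z : ℝ} (hz : z ∈ t) :
    HasDerivWithinAt (fun z => f (x, z)) (fderivWithin ℝ f (s ×ˢ t) (x, z) (0, 1)) t z :=
  (hf (x, z) ⟨hx, hz⟩).hasFDerivWithinAt.comp_hasDerivWithinAt z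
    ((hasDerivWithinAt_const z t x).prodMk (hasDerivWithinAt_id z t)) fun _ hz' => ⟨hx, hz'⟩

theorem setIntegral_le_setIntegral_prod {α β : Type*} [MeasurableSpace α] [MeasurableSpace β]
    {μ : Measure α} {ν : Measure β} [SFinite μ] [SFinite ν] {s : Set α} {t : Set β}
    (hs : MeasurableSet s) {h : α → ℝ} {G : α × β → ℝ} (hh : IntegrableOn h s μ)
    (hG : IntegrableOn G (s ×ˢ t) (μ.prod ν)) (hle : ∀ x ∈ s, h x ≤ ∫ y in t, G (x, y) ∂ν) :
    ∫ x in s, h x ∂μ ≤ ∫ q in s ×ˢ t, G q ∂μ.prod ν := by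
  rw [IntegrableOn, ← Measure.prod_restrict] at hG
  rw [← Measure.prod_restrict, integral_prod _ hG]
  exact setIntegral_mono_on hh hG.integral_prod_left hs hle

theorem integrableOn_rpow_rpow_Icc_zero {b c Z : ℝ} (hZ : 0 ≤ Z) (hbc : -1 < b * c) :
    IntegrableOn (fun z : ℝ => (z ^ b) ^ c) (Icc 0 Z) := by
  have h := (intervalIntegral.intervalIntegrable_rpow' (a := 0) (b := Z) hbc)
  rw [intervalIntegrable_iff_integrableOn_Icc_of_le hZ] at h
  exact h.congr_fun (fun z hz => Real.rpow_mul hz.1 b c) measurableSet_Icc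

theorem exists_holder_exponent {b p : ℝ} (hb0 : 0 ≤ b) (hb1 : b < 1)
    (hp : 2 * (1 + b) / (1 - b) < p) :
    ∃ r, 0 < r ∧ 1 / p + 1 / 2 + 1 / r = 1 ∧ -1 < b * (1 - r) := by
  have hp' : 2 * (1 + b) < p * (1 - b) := (div_lt_iff₀ (by linarith)).1 hp
  have hp2 : 0 < p - 2 := by nlinarith
  have hp0 : p ≠ 0 := by linarith
  refine ⟨2 * p / (p - 2), div_pos (by linarith) hp2, by field_simp; ring, ?_⟩
  have : b * (1 - 2 * p / (p - 2)) = -(b * (p + 2) / (p - 2)) := by field_simp; ring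
  rw [this, neg_lt_neg_iff, div_lt_one hp2]
  linarith

section Box

variable {n : ℕ} {R Z : ℝ}

theorem measurableSet_Bbox : MeasurableSet (Bbox n R) :=
  MeasurableSet.univ_pi fun _ => measurableSet_Icc

theorem isCompact_Bbox : IsCompact (Bbox n R) :=
  isCompact_univ_pi fun _ => isCompact_Icc

theorem isCompact_Dbox : IsCompact (Dbox n R Z) :=
  isCompact_Bbox.prod isCompact_Icc

theorem uniqueDiffOn_Dbox (hR : 0 < R) (hZ : 0 < Z) : UniqueDiffOn ℝ (Dbox n R Z) :=
  (UniqueDiffOn.univ_pi fun _ => uniqueDiffOn_Icc (by linarith)).prod (uniqueDiffOn_Icc hZ)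

theorem volume_restrict_Dbox :
    volume.restrict (Dbox n R Z) = (volume.restrict (Bbox n R)).prod (volume.restrict (Icc 0 Z)) :=
  (Measure.prod_restrict _ _).symm

theorem ae_restrict_Dbox_snd_pos : ∀ᵐ q ∂volume.restrict (Dbox n R Z), 0 < q.2 := by
  rw [volume_restrict_Dbox, ← Measure.restrict_congr_set Ioc_ae_eq_Icc]
  exact (Measure.quasiMeasurePreserving_snd.ae (ae_restrict_mem measurableSet_Ioc)).mono
    fun _ hq => hq.1

theorem integrableOn_Dbox_comp_snd {g : ℝ → ℝ} (hg : IntegrableOn g (Icc 0 Z)) :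
    IntegrableOn (fun q => g q.2) (Dbox n R Z) := by
  have : IsFiniteMeasure (volume.restrict (Bbox n R)) :=
    isFiniteMeasure_restrict.2 isCompact_Bbox.measure_lt_top.ne
  rw [IntegrableOn, volume_restrict_Dbox]
  exact hg.comp_snd _

theorem continuousOn_fderivWithin_Dbox_apply (hR : 0 < R) (hZ : 0 < Z)
    {f : (Fin n → ℝ) × ℝ → ℝ} (hf : ContDiffOn ℝ 1 f (Dbox n R Z)) (v : (Fin n → ℝ) × ℝ) :
    ContinuousOn (fun q => fderivWithin ℝ f (Dbox n R Z) q v) (Dbox n R Z) :=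
  (hf.continuousOn_fderivWithin (uniqueDiffOn_Dbox hR hZ) le_rfl).clm_apply continuousOn_const

theorem integral_sq_Bbox_le (hR : 0 < R) (hZ : 0 < Z) {f : (Fin n → ℝ) × ℝ → ℝ}
    (hf : ContDiffOn ℝ 1 f (Dbox n R Z)) (htop : ∀ x ∈ Bbox n R, f (x, Z) = 0) :
    ∫ x in Bbox n R, f (x, 0) ^ 2 ≤
      2 * ∫ q in Dbox n R Z, |f q| * |fderivWithin ℝ f (Dbox n R Z) q (0, 1)| := by
  have hfc := hf.continuousOn
  have hg := continuousOn_fderivWithin_Dbox_apply hR hZ hf (0, 1)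
  rw [← integral_const_mul]
  refine setIntegral_le_setIntegral_prod (μ := volume) (ν := volume) measurableSet_Bbox ?_ ?_
    fun x hx => ?_
  · refine ContinuousOn.integrableOn_compact isCompact_Bbox ((hfc.comp ?_ ?_).pow 2)
    · fun_prop
    · exact fun x hx => ⟨hx, le_rfl, hZ.le⟩
  · exact (continuousOn_const.mul (hfc.abs.mul hg.abs)).integrableOn_compact isCompact_Dbox
  · have hslice : MapsTo (fun z : ℝ => (x, z)) (Icc 0 Z) (Dbox n R Z) := fun _ hz => ⟨hx, hz⟩
    rw [integral_const_mul]
    exact sq_le_two_mul_integral_abs_mul_abs_deriv hZ.le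
      (fun z hz => (hf.differentiableOn one_ne_zero).hasDerivWithinAt_slice hx hz)
      (hg.comp (by fun_prop) hslice) (htop x hx)

theorem integral_abs_mul_abs_Dbox_le (hZ : 0 < Z) {b p r : ℝ} (hb : 0 ≤ b) (hp : 0 < p)
    (hr : 0 < r) (hexp : 1 / p + 1 / 2 + 1 / r = 1) (hbr : -1 < b * (1 - r))
    {u v : (Fin n → ℝ) × ℝ → ℝ} (hu : ContinuousOn u (Dbox n R Z))
    (hv : ContinuousOn v (Dbox n R Z)) :
    ∫ q in Dbox n R Z, |u q| * |v q| ≤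
      (∫ q in Dbox n R Z, q.2 ^ b * |u q| ^ p) ^ (1 / p) *
        (∫ q in Dbox n R Z, q.2 ^ b * v q ^ 2) ^ (1 / 2 : ℝ) *
          (∫ q in Dbox n R Z, (q.2 ^ b) ^ (1 - r)) ^ (1 / r) := by
  have hw : ContinuousOn (fun q : (Fin n → ℝ) × ℝ => q.2 ^ b) (Dbox n R Z) :=
    ((Real.continuous_rpow_const hb).comp continuous_snd).continuousOn
  have h := integral_abs_mul_abs_le_weighted hp two_pos hr hexp
    (ae_restrict_Dbox_snd_pos.mono fun q hq => Real.rpow_pos_of_pos hq b)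
    ((hw.mul (hu.abs.rpow_const fun _ _ => Or.inr hp.le)).integrableOn_compact isCompact_Dbox)
    ((hw.mul (hv.abs.rpow_const fun _ _ => Or.inr zero_le_two)).integrableOn_compact
      isCompact_Dbox)
    (integrableOn_Dbox_comp_snd (integrableOn_rpow_rpow_Icc_zero hZ.le hbr))
  simpa only [Real.rpow_two, sq_abs] using h

end Box

theorem weighted_trace_inequality_general (n : ℕ) (b p₁ R Z : ℝ)
    (hb : b ∈ Set.Ico (0:ℝ) 1) (hp : 2 * (1 + b) / (1 - b) < p₁)
    (hR : 0 < R) (hZ : 0 < Z) :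
    ∃ C₀ : ℝ, 0 < C₀ ∧ ∀ f : (Fin n → ℝ) × ℝ → ℝ,
      ContDiffOn ℝ 1 f (Dbox n R Z) →
      (∀ x ∈ Bbox n R, f (x, Z) = 0) →
      ∫ x in Bbox n R, f (x, 0) ^ 2 ≤
        C₀ * (∫ q in Dbox n R Z, q.2 ^ b * |f q| ^ p₁) ^ (1 / p₁) *
          (∫ q in Dbox n R Z,
              q.2 ^ b * (fderivWithin ℝ f (Dbox n R Z) q ((0 : Fin n → ℝ), (1:ℝ))) ^ 2) ^
            (1/2 : ℝ) := by
  obtain ⟨hb0, hb1⟩ := hb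
  have hp₁ : 0 < p₁ := (div_nonneg (by linarith) (by linarith)).trans_lt hp
  obtain ⟨r, hr, hexp, hbr⟩ := exists_holder_exponent hb0 hb1 hp
  have hsnd := ae_restrict_Dbox_snd_pos (n := n) (R := R) (Z := Z)
  set K := ∫ q in Dbox n R Z, (q.2 ^ b) ^ (1 - r)
  have hK : 0 ≤ K := integral_nonneg_of_ae (hsnd.mono fun q hq => by positivity)
  refine ⟨2 * K ^ (1 / r) + 1, by positivity, fun f hf htop => ?_⟩
  set A := (∫ q in Dbox n R Z, q.2 ^ b * |f q| ^ p₁) ^ (1 / p₁)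
  set E := (∫ q in Dbox n R Z,
    q.2 ^ b * (fderivWithin ℝ f (Dbox n R Z) q ((0 : Fin n → ℝ), (1:ℝ))) ^ 2) ^ (1 / 2 : ℝ)
  have hA : 0 ≤ A :=
    Real.rpow_nonneg (integral_nonneg_of_ae (hsnd.mono fun q hq => by positivity)) _
  have hE : 0 ≤ E :=
    Real.rpow_nonneg (integral_nonneg_of_ae (hsnd.mono fun q hq => by positivity)) _
  calc ∫ x in Bbox n R, f (x, 0) ^ 2
      ≤ 2 * ∫ q in Dbox n R Z, |f q| * |fderivWithin ℝ f (Dbox n R Z) q (0, 1)| :=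
        integral_sq_Bbox_le hR hZ hf htop
    _ ≤ 2 * (A * E * K ^ (1 / r)) := by
        gcongr
        exact integral_abs_mul_abs_Dbox_le hZ hb0 hp₁ hr hexp hbr hf.continuousOn
          (continuousOn_fderivWithin_Dbox_apply hR hZ hf _)
    _ ≤ (2 * K ^ (1 / r) + 1) * A * E := by nlinarith [mul_nonneg hA hE]

/-- Weighted trace inequality (display (A.29)): for `C¹` functions `f` on `D`
vanishing on the top face `z = Z`,
`∫_B f(x,0)² dx ≤ C₀ (∫∫_D z^b |f|^{p₁})^{1/p₁} (∫∫_D z^b (∂_z f)²)^{1/2}`,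
with `C₀` depending only on `n`, `b`, `p₁`, `R` and `Z`. -/
theorem weighted_trace_inequality (n : ℕ) (hn : 1 ≤ n) (b p₁ R Z : ℝ)
    (hb : b ∈ Set.Ico (0:ℝ) 1) (hp : 2 * (1 + b) / (1 - b) < p₁)
    (hR : 0 < R) (hZ : 0 < Z) :
    ∃ C₀ : ℝ, 0 < C₀ ∧ ∀ f : (Fin n → ℝ) × ℝ → ℝ,
      ContDiffOn ℝ 1 f (Dbox n R Z) →
      (∀ x ∈ Bbox n R, f (x, Z) = 0) →
      ∫ x in Bbox n R, f (x, 0) ^ 2 ≤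
        C₀ * (∫ q in Dbox n R Z, q.2 ^ b * |f q| ^ p₁) ^ (1 / p₁) *
          (∫ q in Dbox n R Z,
              q.2 ^ b * (fderivWithin ℝ f (Dbox n R Z) q ((0 : Fin n → ℝ), (1:ℝ))) ^ 2) ^
            (1/2 : ℝ) :=
  weighted_trace_inequality_general n b p₁ R Z hb hp hR hZ
end
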